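/- Let the bilinear system x' = Ax + Bu + Σ_{i=1}^m N_i x u_i, y = Cx with x(0) = 0 be balanced, i.e., there is a diagonal positive definite Σ = diag(Σ₁, σI) with Σ₁ ∈ ℝ^{r×r}, where the last block of Hankel singular values equals a single value σ > 0, and Σ satisfies both (A + (k²/2)I)ᵀ Σ⁻¹ + Σ⁻¹(A + (k²/2)I) + Σ N_iᵀ Σ⁻¹ N_i ≤ −Σ⁻¹BBᵀΣ⁻¹ and (A + (k²/2)I)ᵀ Σ + Σ(A + (k²/2)I) + Σ N_iᵀ Σ N_i ≤ −CᵀC. Let y_r = C₁ x_r be the output of the truncated system x_r' = A₁₁ x_r + B₁ u + Σ N_{i,11} x_r u_i, x_r(0) = 0. If ‖u(t)‖₂ ≤ k on [0,T], then (∫₀ᵀ ‖y(t) − y_r(t)‖₂² dt)^{1/2} ≤ 2σ (∫₀ᵀ ‖u(t)‖₂² dt)^{1/2}. -/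

import Mathlib

open Matrix BigOperators MeasureTheory intervalIntegral

/-! With `e = x - (x_r, 0)` and `q = x + (x_r, 0)`, both signals obey the full bilinear dynamics
`z' = (A + ∑ uᵢ Nᵢ) z` up to a forcing `(0, g)` on the truncated block, entering `e` and `q` with
opposite signs (and `q` also receives the input `2Bu`). Since `Σ` acts on the truncated block as
`σ`, the coupling terms cancel in the storage function `W = eᵀ Σ e + σ² qᵀ Σ⁻¹ q`. The two
Gramian inequalities, with `‖u‖ ≤ k` absorbing the bilinear terms, then give
`W' + ‖y - y_r‖² ≤ 4σ² ‖u‖²`; integrating from `W(0) = 0` and using `W(T) ≥ 0` proves the bound. -/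

section QuadraticForms

variable {n ι : Type*} [Fintype n] [Fintype ι]

theorem Matrix.IsSymm.dotProduct_mulVec_comm {P : Matrix n n ℝ} (hP : P.IsSymm) (v w : n → ℝ) :
    v ⬝ᵥ P *ᵥ w = w ⬝ᵥ P *ᵥ v := by
  rw [← hP.eq, dotProduct_transpose_mulVec, hP.eq]

theorem Matrix.PosSemidef.two_mul_smul_dotProduct_mulVec_le {P : Matrix n n ℝ}
    (hP : P.PosSemidef) (c : ℝ) (v w : n → ℝ) :
    2 * c * (v ⬝ᵥ P *ᵥ w) ≤ c ^ 2 * (v ⬝ᵥ P *ᵥ v) + w ⬝ᵥ P *ᵥ w := by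
  have h := hP.dotProduct_mulVec_nonneg (c • v - w)
  have hsymm := (isHermitian_iff_isSymm.1 hP.isHermitian).dotProduct_mulVec_comm w v
  simp only [star_trivial, mulVec_sub, mulVec_smul, sub_dotProduct, dotProduct_sub,
    smul_dotProduct, dotProduct_smul, smul_eq_mul, hsymm] at h
  linear_combination h

theorem Matrix.PosSemidef.two_mul_dotProduct_mulVec_add_sum_smul_le [DecidableEq n]
    {P R A : Matrix n n ℝ} {N : ι → Matrix n n ℝ} {k : ℝ} (hP : P.PosSemidef)
    (hLMI : (-R - ((A + (k ^ 2 / 2) • (1 : Matrix n n ℝ))ᵀ * P +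
      P * (A + (k ^ 2 / 2) • (1 : Matrix n n ℝ)) + ∑ i, (N i)ᵀ * P * N i)).PosSemidef)
    {w : ι → ℝ} (hw : ∑ i, w i ^ 2 ≤ k ^ 2) (v : n → ℝ) :
    2 * (v ⬝ᵥ P *ᵥ ((A + ∑ i, w i • N i) *ᵥ v)) ≤ -(v ⬝ᵥ R *ᵥ v) := by
  have hL := hLMI.dotProduct_mulVec_nonneg v
  simp only [star_trivial, sub_mulVec, neg_mulVec, add_mulVec, sum_mulVec, ← mulVec_mulVec,
    dotProduct_sub, dotProduct_neg, dotProduct_add, dotProduct_sum, dotProduct_transpose_mulVec,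
    dotProduct_comm (P *ᵥ _), add_dotProduct, smul_dotProduct, smul_mulVec, one_mulVec,
    mulVec_add, mulVec_smul, dotProduct_smul, smul_eq_mul,
    (isHermitian_iff_isSymm.1 hP.isHermitian).dotProduct_mulVec_comm (A *ᵥ v)] at hL
  have hcross := Finset.sum_le_sum fun i (_ : i ∈ Finset.univ) =>
    hP.two_mul_smul_dotProduct_mulVec_le (w i) v (N i *ᵥ v)
  simp only [Finset.sum_add_distrib, ← Finset.sum_mul, mul_assoc, ← Finset.mul_sum] at hcross
  simp only [add_mulVec, sum_mulVec, smul_mulVec, mulVec_add, mulVec_sum, mulVec_smul,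
    dotProduct_add, dotProduct_sum, dotProduct_smul, smul_eq_mul]
  have hq : 0 ≤ v ⬝ᵥ P *ᵥ v := by simpa using hP.dotProduct_mulVec_nonneg v
  linarith [mul_le_mul_of_nonneg_right hw hq]

theorem four_mul_dotProduct_le (a b : n → ℝ) : 4 * (a ⬝ᵥ b) ≤ a ⬝ᵥ a + 4 * (b ⬝ᵥ b) := by
  have h : 0 ≤ (a - (2 : ℝ) • b) ⬝ᵥ (a - (2 : ℝ) • b) := by
    simpa using dotProduct_self_star_nonneg (a - (2 : ℝ) • b)
  simp only [sub_dotProduct, dotProduct_sub, smul_dotProduct, dotProduct_smul, smul_eq_mul,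
    dotProduct_comm b a] at h
  linarith

theorem Matrix.inv_mulVec_eq_inv_smul_of_mulVec_eq_smul [DecidableEq n] {S : Matrix n n ℝ}
    (hS : IsUnit S.det) {c : ℝ} (hc : c ≠ 0) {v : n → ℝ} (h : S *ᵥ v = c • v) :
    S⁻¹ *ᵥ v = c⁻¹ • v := by
  have h' := congrArg (S⁻¹ *ᵥ ·) h
  simp only [mulVec_mulVec, nonsing_inv_mul _ hS, one_mulVec, mulVec_smul] at h'
  calc S⁻¹ *ᵥ v = c⁻¹ • (c • S⁻¹ *ᵥ v) := by rw [smul_smul, inv_mul_cancel₀ hc, one_smul]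
    _ = c⁻¹ • v := by rw [← h']

end QuadraticForms

section Calculus

variable {n : Type*} [Fintype n]

theorem HasDerivAt.dotProduct {f g : ℝ → n → ℝ} {f' g' : n → ℝ} {t : ℝ}
    (hf : HasDerivAt f f' t) (hg : HasDerivAt g g' t) :
    HasDerivAt (fun τ => f τ ⬝ᵥ g τ) (f' ⬝ᵥ g t + f t ⬝ᵥ g') t := by
  show HasDerivAt (fun τ => ∑ i, f τ i * g τ i) (∑ i, f' i * g t i + ∑ i, f t i * g' i) t
  rw [← Finset.sum_add_distrib]
  exact HasDerivAt.fun_sum fun i _ => (hasDerivAt_pi.1 hf i).mul (hasDerivAt_pi.1 hg i)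

theorem HasDerivAt.matrix_mulVec {m : Type*} (P : Matrix m n ℝ) {f : ℝ → n → ℝ} {f' : n → ℝ}
    {t : ℝ} (hf : HasDerivAt f f' t) : HasDerivAt (fun τ => P *ᵥ f τ) (P *ᵥ f') t :=
  hasDerivAt_pi.2 fun i => by
    simpa [mulVec] using (hasDerivAt_const t (P i)).dotProduct hf

theorem HasDerivAt.dotProduct_mulVec_self {P : Matrix n n ℝ} (hP : P.IsSymm) {f : ℝ → n → ℝ}
    {f' : n → ℝ} {t : ℝ} (hf : HasDerivAt f f' t) :
    HasDerivAt (fun τ => f τ ⬝ᵥ P *ᵥ f τ) (2 * (f t ⬝ᵥ P *ᵥ f')) t := by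
  convert hf.dotProduct (hf.matrix_mulVec P) using 1
  rw [hP.dotProduct_mulVec_comm f']
  ring

theorem HasDerivAt.sum_elim_zero {α β : Type*} {f : ℝ → α → ℝ} {f' : α → ℝ} {t : ℝ}
    (hf : HasDerivAt f f' t) :
    HasDerivAt (fun τ => Sum.elim (f τ) (0 : β → ℝ)) (Sum.elim f' 0) t := by
  refine hasDerivAt_pi.2 fun j => ?_
  cases j with
  | inl i => exact hasDerivAt_pi.1 hf i
  | inr j => exact hasDerivAt_const t 0

theorem integral_le_integral_of_hasDerivAt_add_le {V f h : ℝ → ℝ} {a b : ℝ} (hab : a ≤ b)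
    (hV : ∀ t ∈ Set.Icc a b, ∃ V', HasDerivAt V V' t ∧ V' + f t ≤ h t)
    (hf : ContinuousOn f (Set.Icc a b)) (hh : ContinuousOn h (Set.Icc a b)) (hVab : V a ≤ V b) :
    ∫ t in a..b, f t ≤ ∫ t in a..b, h t := by
  choose! V' hV' hle using hV
  have hmono : V b - V a ≤ ∫ t in a..b, (h t - f t) :=
    sub_le_integral_of_hasDeriv_right_of_le hab
      (fun t ht => (hV' t ht).continuousAt.continuousWithinAt)
      (fun t ht => (hV' t (Set.Ioo_subset_Icc_self ht)).hasDerivWithinAt)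
      (hh.sub hf).integrableOn_Icc
      (fun t ht => by linarith [hle t (Set.Ioo_subset_Icc_self ht)])
  rw [integral_sub (hh.intervalIntegrable_of_Icc hab) (hf.intervalIntegrable_of_Icc hab)] at hmono
  linarith

end Calculus

section Blocks

theorem Matrix.mulVec_eq_sum_elim {α β ι : Type*} [Fintype ι] (B : Matrix (α ⊕ β) ι ℝ)
    (w : ι → ℝ) :
    B *ᵥ w = Sum.elim (B.submatrix Sum.inl id *ᵥ w) (B.submatrix Sum.inr id *ᵥ w) := by
  ext (i | i) <;> rfl

theorem posDef_fromBlocks_diagonal_smul_one {α β : Type*} [DecidableEq α] [DecidableEq β]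
    {d : α → ℝ} (hd : ∀ i, 0 < d i) {σ : ℝ} (hσ : 0 < σ) :
    (fromBlocks (diagonal d) 0 0 (σ • (1 : Matrix β β ℝ))).PosDef := by
  rw [smul_one_eq_diagonal, fromBlocks_diagonal, posDef_diagonal_iff]
  rintro (i | i)
  exacts [hd i, hσ]

variable {α β γ : Type*} [Fintype α] [Fintype β]

theorem Matrix.mulVec_sum_elim_zero (M : Matrix γ (α ⊕ β) ℝ) (z : α → ℝ) :
    M *ᵥ Sum.elim z 0 = M.submatrix id Sum.inl *ᵥ z := by
  ext j
  simp [mulVec, dotProduct, Fintype.sum_sum_type]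

theorem Matrix.mulVec_sum_elim_zero_eq_toBlocks (M : Matrix (α ⊕ β) (α ⊕ β) ℝ) (z : α → ℝ) :
    M *ᵥ Sum.elim z 0 = Sum.elim (M.toBlocks₁₁ *ᵥ z) (M.toBlocks₂₁ *ᵥ z) := by
  ext (i | i) <;> simp [mulVec, dotProduct, Fintype.sum_sum_type, toBlocks₁₁, toBlocks₂₁]

theorem dotProduct_sum_elim_zero (v : α ⊕ β → ℝ) (g : β → ℝ) :
    v ⬝ᵥ Sum.elim 0 g = (v ∘ Sum.inr) ⬝ᵥ g := by
  simp [dotProduct, Fintype.sum_sum_type]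

theorem fromBlocks_diagonal_smul_one_mulVec_sum_elim_zero [DecidableEq α] [DecidableEq β]
    (d : α → ℝ) (σ : ℝ) (g : β → ℝ) :
    fromBlocks (diagonal d) 0 0 (σ • (1 : Matrix β β ℝ)) *ᵥ Sum.elim (0 : α → ℝ) g =
      σ • Sum.elim (0 : α → ℝ) g := by
  ext (i | i) <;> simp [fromBlocks_mulVec, smul_mulVec]

end Blocks

section Truncation

variable {α β ι : Type*} [Fintype α] [Fintype β] [Fintype ι]

def truncationResidual (A : Matrix (α ⊕ β) (α ⊕ β) ℝ) (B : Matrix (α ⊕ β) ι ℝ)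
    (N : ι → Matrix (α ⊕ β) (α ⊕ β) ℝ) (z : α → ℝ) (w : ι → ℝ) : β → ℝ :=
  A.toBlocks₂₁ *ᵥ z + B.submatrix Sum.inr id *ᵥ w + ∑ i, w i • ((N i).toBlocks₂₁ *ᵥ z)

theorem sum_elim_reduced_dynamics_eq (A : Matrix (α ⊕ β) (α ⊕ β) ℝ) (B : Matrix (α ⊕ β) ι ℝ)
    (N : ι → Matrix (α ⊕ β) (α ⊕ β) ℝ) (z : α → ℝ) (w : ι → ℝ) :
    Sum.elim (A.toBlocks₁₁ *ᵥ z + B.submatrix Sum.inl id *ᵥ w +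
        ∑ i, w i • ((N i).toBlocks₁₁ *ᵥ z)) 0 =
      (A + ∑ i, w i • N i) *ᵥ Sum.elim z 0 + B *ᵥ w -
        Sum.elim (0 : α → ℝ) (truncationResidual A B N z w) := by
  simp only [truncationResidual, add_mulVec, sum_mulVec, smul_mulVec,
    mulVec_sum_elim_zero_eq_toBlocks, B.mulVec_eq_sum_elim]
  ext (i | i) <;> simp [Finset.sum_apply] <;> ring

theorem hasDerivAt_truncation_error {A : Matrix (α ⊕ β) (α ⊕ β) ℝ} {B : Matrix (α ⊕ β) ι ℝ}
    {N : ι → Matrix (α ⊕ β) (α ⊕ β) ℝ} {x : ℝ → α ⊕ β → ℝ} {xr : ℝ → α → ℝ} {w : ι → ℝ}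
    {t : ℝ} (hx : HasDerivAt x (A *ᵥ x t + B *ᵥ w + ∑ i, w i • (N i *ᵥ x t)) t)
    (hxr : HasDerivAt xr (A.toBlocks₁₁ *ᵥ xr t + B.submatrix Sum.inl id *ᵥ w +
      ∑ i, w i • ((N i).toBlocks₁₁ *ᵥ xr t)) t) :
    HasDerivAt (fun τ => x τ - Sum.elim (xr τ) 0)
        ((A + ∑ i, w i • N i) *ᵥ (x t - Sum.elim (xr t) 0) +
          Sum.elim (0 : α → ℝ) (truncationResidual A B N (xr t) w)) t ∧
      HasDerivAt (fun τ => x τ + Sum.elim (xr τ) 0)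
        ((A + ∑ i, w i • N i) *ᵥ (x t + Sum.elim (xr t) 0) + (2 : ℝ) • (B *ᵥ w) -
          Sum.elim (0 : α → ℝ) (truncationResidual A B N (xr t) w)) t := by
  have hι := hxr.sum_elim_zero (β := β)
  rw [sum_elim_reduced_dynamics_eq] at hι
  have hfull : A *ᵥ x t + B *ᵥ w + ∑ i, w i • (N i *ᵥ x t) =
      (A + ∑ i, w i • N i) *ᵥ x t + B *ᵥ w := by
    simp only [add_mulVec, sum_mulVec, smul_mulVec]
    abel
  rw [hfull] at hx
  constructor
  · refine (hx.sub hι).congr_deriv ?_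
    rw [mulVec_sub]
    abel
  · refine (hx.add hι).congr_deriv ?_
    rw [mulVec_add, two_smul]
    abel

end Truncation

noncomputable def truncationStorage {n : Type*} [Fintype n] [DecidableEq n] (S : Matrix n n ℝ)
    (σ : ℝ) (e q : n → ℝ) : ℝ :=
  e ⬝ᵥ S *ᵥ e + σ ^ 2 * (q ⬝ᵥ S⁻¹ *ᵥ q)

theorem truncationStorage_nonneg {n : Type*} [Fintype n] [DecidableEq n] {S : Matrix n n ℝ}
    (hS : S.PosDef) (σ : ℝ) (e q : n → ℝ) : 0 ≤ truncationStorage S σ e q :=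
  add_nonneg (hS.posSemidef.dotProduct_mulVec_nonneg e)
    (mul_nonneg (sq_nonneg σ) (hS.inv.posSemidef.dotProduct_mulVec_nonneg q))

@[simp]
theorem truncationStorage_zero {n : Type*} [Fintype n] [DecidableEq n] (S : Matrix n n ℝ)
    (σ : ℝ) : truncationStorage S σ 0 0 = 0 := by
  simp [truncationStorage]

section Energy

variable {α β γ ι : Type*} [Fintype α] [Fintype β] [Fintype γ] [Fintype ι]
  [DecidableEq α] [DecidableEq β]

theorem balanced_energy_rate_le {S A : Matrix (α ⊕ β) (α ⊕ β) ℝ} {B : Matrix (α ⊕ β) ι ℝ}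
    {N : ι → Matrix (α ⊕ β) (α ⊕ β) ℝ} {C : Matrix γ (α ⊕ β) ℝ} {k σ : ℝ} (hσ : σ ≠ 0)
    (hS : S.PosDef)
    (hSσ : ∀ g : β → ℝ, S *ᵥ Sum.elim (0 : α → ℝ) g = σ • Sum.elim (0 : α → ℝ) g)
    (hreach : ((-(S⁻¹ * B * Bᵀ * S⁻¹)) -
        ((A + (k ^ 2 / 2) • (1 : Matrix (α ⊕ β) (α ⊕ β) ℝ))ᵀ * S⁻¹ +
          S⁻¹ * (A + (k ^ 2 / 2) • (1 : Matrix (α ⊕ β) (α ⊕ β) ℝ)) +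
          ∑ i, (N i)ᵀ * S⁻¹ * N i)).PosSemidef)
    (hobs : ((-(Cᵀ * C)) -
        ((A + (k ^ 2 / 2) • (1 : Matrix (α ⊕ β) (α ⊕ β) ℝ))ᵀ * S +
          S * (A + (k ^ 2 / 2) • (1 : Matrix (α ⊕ β) (α ⊕ β) ℝ)) +
          ∑ i, (N i)ᵀ * S * N i)).PosSemidef)
    {w : ι → ℝ} (hw : ∑ i, w i ^ 2 ≤ k ^ 2) {e q : α ⊕ β → ℝ}
    (heq : e ∘ Sum.inr = q ∘ Sum.inr) (g : β → ℝ) :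
    2 * (e ⬝ᵥ S *ᵥ ((A + ∑ i, w i • N i) *ᵥ e + Sum.elim (0 : α → ℝ) g)) +
        σ ^ 2 * (2 * (q ⬝ᵥ S⁻¹ *ᵥ
          ((A + ∑ i, w i • N i) *ᵥ q + (2 : ℝ) • (B *ᵥ w) - Sum.elim (0 : α → ℝ) g))) +
        (C *ᵥ e) ⬝ᵥ (C *ᵥ e) ≤
      4 * σ ^ 2 * (w ⬝ᵥ w) := by
  set b := Bᵀ *ᵥ (S⁻¹ *ᵥ q)
  have hSinvT : S⁻¹ᵀ = S⁻¹ := isHermitian_iff_isSymm.1 hS.inv.isHermitian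
  have hB : ∀ y, q ⬝ᵥ S⁻¹ *ᵥ (B *ᵥ y) = b ⬝ᵥ y := fun y => by
    rw [dotProduct_mulVec, dotProduct_mulVec, ← mulVec_transpose, ← mulVec_transpose, hSinvT]
  have hobs' := hS.posSemidef.two_mul_dotProduct_mulVec_add_sum_smul_le hobs hw e
  rw [← mulVec_mulVec, dotProduct_transpose_mulVec] at hobs'
  have hreach' := hS.inv.posSemidef.two_mul_dotProduct_mulVec_add_sum_smul_le hreach hw q
  rw [← mulVec_mulVec, ← mulVec_mulVec, ← mulVec_mulVec, hB] at hreach'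
  change _ ≤ -(b ⬝ᵥ b) at hreach'
  have hyoung := four_mul_dotProduct_le b w
  have hinr : q ⬝ᵥ Sum.elim (0 : α → ℝ) g = e ⬝ᵥ Sum.elim (0 : α → ℝ) g := by
    rw [dotProduct_sum_elim_zero, dotProduct_sum_elim_zero, heq]
  simp only [mulVec_add, mulVec_sub, hSσ, mulVec_smul, dotProduct_add, dotProduct_sub,
    dotProduct_smul, smul_eq_mul, hB, hinr, inv_mulVec_eq_inv_smul_of_mulVec_eq_smul
      (S.isUnit_iff_isUnit_det.mp hS.isUnit) hσ (hSσ g)]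
  have hσσ : σ ^ 2 * σ⁻¹ = σ := by field_simp
  linear_combination hobs' + σ ^ 2 * hreach' + σ ^ 2 * hyoung
    - 2 * (e ⬝ᵥ Sum.elim (0 : α → ℝ) g) * hσσ

theorem exists_hasDerivAt_truncationStorage_add_le {S A : Matrix (α ⊕ β) (α ⊕ β) ℝ}
    {B : Matrix (α ⊕ β) ι ℝ} {N : ι → Matrix (α ⊕ β) (α ⊕ β) ℝ} {C : Matrix γ (α ⊕ β) ℝ}
    {k σ : ℝ} (hσ : σ ≠ 0) (hS : S.PosDef)
    (hSσ : ∀ g : β → ℝ, S *ᵥ Sum.elim (0 : α → ℝ) g = σ • Sum.elim (0 : α → ℝ) g)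
    (hreach : ((-(S⁻¹ * B * Bᵀ * S⁻¹)) -
        ((A + (k ^ 2 / 2) • (1 : Matrix (α ⊕ β) (α ⊕ β) ℝ))ᵀ * S⁻¹ +
          S⁻¹ * (A + (k ^ 2 / 2) • (1 : Matrix (α ⊕ β) (α ⊕ β) ℝ)) +
          ∑ i, (N i)ᵀ * S⁻¹ * N i)).PosSemidef)
    (hobs : ((-(Cᵀ * C)) -
        ((A + (k ^ 2 / 2) • (1 : Matrix (α ⊕ β) (α ⊕ β) ℝ))ᵀ * S +
          S * (A + (k ^ 2 / 2) • (1 : Matrix (α ⊕ β) (α ⊕ β) ℝ)) +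
          ∑ i, (N i)ᵀ * S * N i)).PosSemidef)
    {x : ℝ → α ⊕ β → ℝ} {xr : ℝ → α → ℝ} {w : ι → ℝ} {t : ℝ} (hw : ∑ i, w i ^ 2 ≤ k ^ 2)
    (hx : HasDerivAt x (A *ᵥ x t + B *ᵥ w + ∑ i, w i • (N i *ᵥ x t)) t)
    (hxr : HasDerivAt xr (A.toBlocks₁₁ *ᵥ xr t + B.submatrix Sum.inl id *ᵥ w +
      ∑ i, w i • ((N i).toBlocks₁₁ *ᵥ xr t)) t) :
    ∃ W', HasDerivAt (fun τ => truncationStorage S σ (x τ - Sum.elim (xr τ) 0)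
        (x τ + Sum.elim (xr τ) 0)) W' t ∧
      W' + ∑ j, ((C *ᵥ x t) j - (C.submatrix id Sum.inl *ᵥ xr t) j) ^ 2 ≤
        4 * σ ^ 2 * ∑ i, w i ^ 2 := by
  obtain ⟨he, hq⟩ := hasDerivAt_truncation_error hx hxr
  refine ⟨_, (he.dotProduct_mulVec_self (isHermitian_iff_isSymm.1 hS.isHermitian)).add
    ((hq.dotProduct_mulVec_self (isHermitian_iff_isSymm.1 hS.inv.isHermitian)).const_mul
      (σ ^ 2)), ?_⟩
  have hrate := balanced_energy_rate_le hσ hS hSσ hreach hobs hw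
    (e := x t - Sum.elim (xr t) 0) (q := x t + Sum.elim (xr t) 0) (by ext j; simp)
    (truncationResidual A B N (xr t) w)
  have hCe : (C *ᵥ (x t - Sum.elim (xr t) 0)) ⬝ᵥ (C *ᵥ (x t - Sum.elim (xr t) 0)) =
      ∑ j, ((C *ᵥ x t) j - (C.submatrix id Sum.inl *ᵥ xr t) j) ^ 2 := by
    simp [mulVec_sub, mulVec_sum_elim_zero, dotProduct, sq]
  have hww : w ⬝ᵥ w = ∑ i, w i ^ 2 := by simp [dotProduct, sq]
  rwa [hCe, hww] at hrate

end Energy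

theorem stmt_12_general {r s m p : ℕ} (T k sig : ℝ) (hT : 0 < T) (hsig : 0 < sig)
    (A : Matrix (Fin r ⊕ Fin s) (Fin r ⊕ Fin s) ℝ)
    (B : Matrix (Fin r ⊕ Fin s) (Fin m) ℝ)
    (N : Fin m → Matrix (Fin r ⊕ Fin s) (Fin r ⊕ Fin s) ℝ)
    (C : Matrix (Fin p) (Fin r ⊕ Fin s) ℝ)
    (d₁ : Fin r → ℝ) (hd₁ : ∀ i, 0 < d₁ i)
    -- balanced Gramian Σ = diag(Σ₁, σ I)
    (S : Matrix (Fin r ⊕ Fin s) (Fin r ⊕ Fin s) ℝ)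
    (hS : S = Matrix.fromBlocks (Matrix.diagonal d₁) 0 0 (sig • (1 : Matrix (Fin s) (Fin s) ℝ)))
    -- type II reachability inequality
    (hreach : ((-(S⁻¹ * B * Bᵀ * S⁻¹)) -
        ((A + (k ^ 2 / 2) • (1 : Matrix (Fin r ⊕ Fin s) (Fin r ⊕ Fin s) ℝ))ᵀ * S⁻¹ +
          S⁻¹ * (A + (k ^ 2 / 2) • (1 : Matrix (Fin r ⊕ Fin s) (Fin r ⊕ Fin s) ℝ)) +
          ∑ i, (N i)ᵀ * S⁻¹ * N i)).PosSemidef)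
    -- type II observability inequality
    (hobs : ((-(Cᵀ * C)) -
        ((A + (k ^ 2 / 2) • (1 : Matrix (Fin r ⊕ Fin s) (Fin r ⊕ Fin s) ℝ))ᵀ * S +
          S * (A + (k ^ 2 / 2) • (1 : Matrix (Fin r ⊕ Fin s) (Fin r ⊕ Fin s) ℝ)) +
          ∑ i, (N i)ᵀ * S * N i)).PosSemidef)
    (u : ℝ → Fin m → ℝ) (hu : Continuous u)
    (hubd : ∀ t ∈ Set.Icc (0 : ℝ) T, Real.sqrt (∑ i, (u t i) ^ 2) ≤ k)
    -- full state
    (x : ℝ → (Fin r ⊕ Fin s) → ℝ) (hx0 : x 0 = 0)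
    (hx : ∀ t ∈ Set.Icc (0 : ℝ) T,
      HasDerivAt x (A *ᵥ x t + B *ᵥ u t + ∑ i, u t i • (N i *ᵥ x t)) t)
    -- reduced state
    (xr : ℝ → Fin r → ℝ) (hxr0 : xr 0 = 0)
    (hxr : ∀ t ∈ Set.Icc (0 : ℝ) T,
      HasDerivAt xr (A.toBlocks₁₁ *ᵥ xr t + B.submatrix Sum.inl id *ᵥ u t +
        ∑ i, u t i • ((N i).toBlocks₁₁ *ᵥ xr t)) t) :
    Real.sqrt (∫ t in (0 : ℝ)..T,
        ∑ j, ((C *ᵥ x t) j - (C.submatrix id Sum.inl *ᵥ xr t) j) ^ 2) ≤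
      2 * sig * Real.sqrt (∫ t in (0 : ℝ)..T, ∑ i, (u t i) ^ 2) := by
  subst hS
  have hcx : ContinuousOn x (Set.Icc 0 T) := HasDerivAt.continuousOn hx
  have hcxr : ContinuousOn xr (Set.Icc 0 T) := HasDerivAt.continuousOn hxr
  have hSpos := posDef_fromBlocks_diagonal_smul_one (β := Fin s) hd₁ hsig
  have hint := integral_le_integral_of_hasDerivAt_add_le hT.le
    (fun t ht => exists_hasDerivAt_truncationStorage_add_le hsig.ne' hSpos
      (fromBlocks_diagonal_smul_one_mulVec_sum_elim_zero d₁ sig) hreach hobs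
      (Real.sqrt_le_iff.1 (hubd t ht)).2 (hx t ht) (hxr t ht))
    (by fun_prop) (by fun_prop)
    (by simpa [hx0, hxr0] using truncationStorage_nonneg hSpos sig _ _)
  rw [intervalIntegral.integral_const_mul] at hint
  calc _ ≤ √((2 * sig) ^ 2 * ∫ t in (0 : ℝ)..T, ∑ i, (u t i) ^ 2) :=
        Real.sqrt_le_sqrt (by linarith)
    _ = _ := by rw [Real.sqrt_mul (sq_nonneg _), Real.sqrt_sq (by positivity)]

theorem stmt_12 {r s m p : ℕ} (T k sig : ℝ) (hT : 0 < T) (hk : 0 < k) (hsig : 0 < sig)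
    (A : Matrix (Fin r ⊕ Fin s) (Fin r ⊕ Fin s) ℝ)
    (B : Matrix (Fin r ⊕ Fin s) (Fin m) ℝ)
    (N : Fin m → Matrix (Fin r ⊕ Fin s) (Fin r ⊕ Fin s) ℝ)
    (C : Matrix (Fin p) (Fin r ⊕ Fin s) ℝ)
    (d₁ : Fin r → ℝ) (hd₁ : ∀ i, 0 < d₁ i)
    -- balanced Gramian Σ = diag(Σ₁, σ I)
    (S : Matrix (Fin r ⊕ Fin s) (Fin r ⊕ Fin s) ℝ)
    (hS : S = Matrix.fromBlocks (Matrix.diagonal d₁) 0 0 (sig • (1 : Matrix (Fin s) (Fin s) ℝ)))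
    -- type II reachability inequality
    (hreach : ((-(S⁻¹ * B * Bᵀ * S⁻¹)) -
        ((A + (k ^ 2 / 2) • (1 : Matrix (Fin r ⊕ Fin s) (Fin r ⊕ Fin s) ℝ))ᵀ * S⁻¹ +
          S⁻¹ * (A + (k ^ 2 / 2) • (1 : Matrix (Fin r ⊕ Fin s) (Fin r ⊕ Fin s) ℝ)) +
          ∑ i, (N i)ᵀ * S⁻¹ * N i)).PosSemidef)
    -- type II observability inequality
    (hobs : ((-(Cᵀ * C)) -
        ((A + (k ^ 2 / 2) • (1 : Matrix (Fin r ⊕ Fin s) (Fin r ⊕ Fin s) ℝ))ᵀ * S +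
          S * (A + (k ^ 2 / 2) • (1 : Matrix (Fin r ⊕ Fin s) (Fin r ⊕ Fin s) ℝ)) +
          ∑ i, (N i)ᵀ * S * N i)).PosSemidef)
    (u : ℝ → Fin m → ℝ) (hu : Continuous u)
    (hubd : ∀ t ∈ Set.Icc (0 : ℝ) T, Real.sqrt (∑ i, (u t i) ^ 2) ≤ k)
    -- full state
    (x : ℝ → (Fin r ⊕ Fin s) → ℝ) (hx0 : x 0 = 0)
    (hx : ∀ t ∈ Set.Icc (0 : ℝ) T,
      HasDerivAt x (A *ᵥ x t + B *ᵥ u t + ∑ i, u t i • (N i *ᵥ x t)) t)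
    -- reduced state
    (xr : ℝ → Fin r → ℝ) (hxr0 : xr 0 = 0)
    (hxr : ∀ t ∈ Set.Icc (0 : ℝ) T,
      HasDerivAt xr (A.toBlocks₁₁ *ᵥ xr t + B.submatrix Sum.inl id *ᵥ u t +
        ∑ i, u t i • ((N i).toBlocks₁₁ *ᵥ xr t)) t) :
    Real.sqrt (∫ t in (0 : ℝ)..T,
        ∑ j, ((C *ᵥ x t) j - (C.submatrix id Sum.inl *ᵥ xr t) j) ^ 2) ≤
      2 * sig * Real.sqrt (∫ t in (0 : ℝ)..T, ∑ i, (u t i) ^ 2) :=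
  stmt_12_general T k sig hT hsig A B N C d₁ hd₁ S hS hreach hobs u hu hubd x hx0 hx xr hxr0 hxr
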